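/- arXiv:2010.07899 — 2 statements merged into one kernel-verified Lean document; each statement's English description precedes it below -/
import Mathlib

section
/- Let h : P → Set (Δτ × P) be the transition function of the SPC labelled transition system, i.e. (δ, q) ∈ h(p) iff p →δ q. Define η(p) = {(τ, p)}, define the Kleisli composition (g ⋄ f)(p) = {(δ, r) | ∃ q, (τ, q) ∈ f(p) ∧ (δ, r) ∈ g(q)} ∪ {(δ, r) | ∃ q, (δ, q) ∈ f(p) ∧ (τ, r) ∈ g(q)}, define (η ∨ h)(p) = η(p) ∪ h(p), powers by (η ∨ h)^0 = η and (η ∨ h)^{n+1} = (η ∨ h)^n ⋄ (η ∨ h), and the saturation h⋆(p) = ⋃_{n∈ℕ} (η ∨ h)^n(p). Then for all processes p, q and all δ ∈ Δτ: (δ, q) ∈ h⋆(p) if and only if p ⇒δ q, i.e. the saturation coincides with the standard weak transition relation. -/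
/-- Labels `Δτ = Δ ∪ Δ̄ ∪ {τ}`: actions, coactions and the internal action `τ`. -/
inductive Lab (Δ : Type) : Type
  | act : Δ → Lab Δ
  | coact : Δ → Lab Δ
  | tau : Lab Δ

/-- Processes of the simple process calculus SPC:
`p ::= 0 | δ.p | p ∥ q | p + q`. -/
inductive Proc (Δ : Type) : Type
  | nil : Proc Δ
  | pre : Lab Δ → Proc Δ → Proc Δ
  | par : Proc Δ → Proc Δ → Proc Δ
  | choice : Proc Δ → Proc Δ → Proc Δ

/-- The labelled transition system of SPC. -/
inductive Step {Δ : Type} : Proc Δ → Lab Δ → Proc Δ → Prop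
  | pre (δ : Lab Δ) (p : Proc Δ) : Step (.pre δ p) δ p
  | choiceL {p p' q : Proc Δ} {δ : Lab Δ} : Step p δ p' → Step (.choice p q) δ p'
  | choiceR {p q q' : Proc Δ} {δ : Lab Δ} : Step q δ q' → Step (.choice p q) δ q'
  | parL {p p' q : Proc Δ} {δ : Lab Δ} : Step p δ p' → Step (.par p q) δ (.par p' q)
  | parR {p q q' : Proc Δ} {δ : Lab Δ} : Step q δ q' → Step (.par p q) δ (.par p q')
  | syn {p p' q q' : Proc Δ} {a : Δ} :
      Step p (.act a) p' → Step q (.coact a) q' → Step (.par p q) .tau (.par p' q')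

/-- `p ⇒ q`: the reflexive–transitive closure of `→τ`, for an arbitrary
labelled transition relation `step`. -/
def TauStar {Δ P : Type} (step : P → Lab Δ → P → Prop) : P → P → Prop :=
  Relation.ReflTransGen (fun p q => step p Lab.tau q)

/-- The weak transition relation `p ⇒δ q`: for `δ = τ` it is `p ⇒ q`,
otherwise `p ⇒ p' →δ q' ⇒ q`. -/
def WStep {Δ P : Type} (step : P → Lab Δ → P → Prop) (p : P) (δ : Lab Δ) (q : P) : Prop :=
  (δ = Lab.tau ∧ TauStar step p q) ∨
  (δ ≠ Lab.tau ∧ ∃ p' q', TauStar step p p' ∧ step p' δ q' ∧ TauStar step q' q)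

/-- A relation `R` is a weak bisimulation if every step from one side is matched
by a weak step from the other side, ending in `R`-related states. -/
def IsWeakBisim {Δ P : Type} (step : P → Lab Δ → P → Prop) (R : P → P → Prop) : Prop :=
  ∀ p q, R p q →
    (∀ δ p', step p δ p' → ∃ q', WStep step q δ q' ∧ R p' q') ∧
    (∀ δ q', step q δ q' → ∃ p', WStep step p δ p' ∧ R p' q')

/-- Weak bisimilarity `p ≈ q`: `p` and `q` are related by some weak bisimulation. -/
def WBisim {Δ P : Type} (step : P → Lab Δ → P → Prop) (p q : P) : Prop :=
  ∃ R, IsWeakBisim step R ∧ R p q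

/-- The unit of the monad `𝒫c(Δτ × Id)`: `η(p) = {(τ, p)}`. -/
def eta {Δ : Type} (p : Proc Δ) : Set (Lab Δ × Proc Δ) := {(Lab.tau, p)}

/-- Kleisli composition for the monad `𝒫c(Δτ × Id)`:
`(g ⋄ f)(p) = {(δ, r) | ∃ q, (τ, q) ∈ f p ∧ (δ, r) ∈ g q} ∪
             {(δ, r) | ∃ q, (δ, q) ∈ f p ∧ (τ, r) ∈ g q}`. -/
def kcomp {Δ : Type} (g f : Proc Δ → Set (Lab Δ × Proc Δ)) (p : Proc Δ) :
    Set (Lab Δ × Proc Δ) :=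
  {x | ∃ q, (Lab.tau, q) ∈ f p ∧ x ∈ g q} ∪
  {x | ∃ q, (x.1, q) ∈ f p ∧ (Lab.tau, x.2) ∈ g q}

/-- `(η ∨ h)(p) = η(p) ∪ h(p)`. -/
def vee {Δ : Type} (h : Proc Δ → Set (Lab Δ × Proc Δ)) (p : Proc Δ) :
    Set (Lab Δ × Proc Δ) :=
  eta p ∪ h p

/-- Powers: `(η ∨ h)^0 = η` and `(η ∨ h)^{n+1} = (η ∨ h)^n ⋄ (η ∨ h)`. -/
def pow {Δ : Type} (h : Proc Δ → Set (Lab Δ × Proc Δ)) :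
    ℕ → Proc Δ → Set (Lab Δ × Proc Δ)
  | 0 => eta
  | n + 1 => kcomp (pow h n) (vee h)

/-- The saturation `h⋆(p) = ⋃_{n ∈ ℕ} (η ∨ h)^n(p)`. -/
def sat {Δ : Type} (h : Proc Δ → Set (Lab Δ × Proc Δ)) (p : Proc Δ) :
    Set (Lab Δ × Proc Δ) :=
  ⋃ n : ℕ, pow h n p


section Aux
variable {Δ : Type}


/-! `(η ∨ h)^n(p)` collects the weak transitions from `p` made of at most `n` optional steps:
composing with `η ∨ h` on the right prepends one optional step, and the Kleisli composition
lets a visible label enter at most once, since its other factor must carry `τ`. Conversely,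
the union over all `n` is closed under prepending `τ`-steps (the first summand of `⋄`) and, by
induction on `n`, under appending them (the second summand), which builds any `p ⇒ p' →δ q' ⇒ q`
from the single step `p' →δ q'`. -/

namespace WStep

variable {Δ P : Type} {step : P → Lab Δ → P → Prop} {p r q : P} {δ : Lab Δ}

theorem tauStar (h : WStep step p .tau q) : TauStar step p q := by
  rcases h with ⟨-, h⟩ | ⟨hne, -⟩
  · exact h
  · exact absurd rfl hne

theorem head (hs : step p .tau r) (h : WStep step r δ q) : WStep step p δ q := by
  rcases h with ⟨hδ, h⟩ | ⟨hδ, p', q', h₁, h₂, h₃⟩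
  · exact .inl ⟨hδ, .head hs h⟩
  · exact .inr ⟨hδ, p', q', .head hs h₁, h₂, h₃⟩

theorem of_step_of_tauStar (hs : step p δ r) (h : TauStar step r q) : WStep step p δ q := by
  by_cases hδ : δ = .tau
  · subst hδ
    exact .inl ⟨rfl, .head hs h⟩
  · exact .inr ⟨hδ, p, r, .refl, hs, h⟩

end WStep

section Saturation

variable {Δ : Type} {step : Proc Δ → Lab Δ → Proc Δ → Prop} {p r q : Proc Δ} {δ : Lab Δ}

def transFun (step : Proc Δ → Lab Δ → Proc Δ → Prop) (p : Proc Δ) : Set (Lab Δ × Proc Δ) :=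
  {x | step p x.1 x.2}

theorem mem_vee_transFun {x : Lab Δ × Proc Δ} :
    x ∈ vee (transFun step) p ↔ x = (.tau, p) ∨ step p x.1 x.2 :=
  Iff.rfl

theorem wStep_of_mem_pow (n : ℕ) (h : (δ, q) ∈ pow (transFun step) n p) :
    WStep step p δ q := by
  induction n generalizing p q δ with
  | zero =>
    obtain ⟨rfl, rfl⟩ := Prod.mk.inj h
    exact .inl ⟨rfl, .refl⟩
  | succ n ih =>
    rcases h with ⟨r, hr, hq⟩ | ⟨r, hr, hq⟩
    · rcases mem_vee_transFun.1 hr with hr | hr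
      · obtain rfl := (Prod.mk.inj hr).2
        exact ih hq
      · exact (ih hq).head hr
    · have hrq : TauStar step r q := (ih hq).tauStar
      rcases mem_vee_transFun.1 hr with hr | hr
      · obtain ⟨rfl, rfl⟩ := Prod.mk.inj hr
        exact .inl ⟨rfl, hrq⟩
      · exact .of_step_of_tauStar hr hrq

theorem mem_pow_succ_of_step_tau (hs : step p .tau r) {n : ℕ}
    (h : (δ, q) ∈ pow (transFun step) n r) : (δ, q) ∈ pow (transFun step) (n + 1) p :=
  .inl ⟨r, .inr hs, h⟩

theorem mem_pow_succ_of_mem_pow_of_step_tau (hs : step q .tau r) (n : ℕ)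
    (h : (δ, q) ∈ pow (transFun step) n p) : (δ, r) ∈ pow (transFun step) (n + 1) p := by
  induction n generalizing p δ with
  | zero =>
    obtain ⟨rfl, rfl⟩ := Prod.mk.inj h
    exact .inl ⟨r, .inr hs, rfl⟩
  | succ n ih =>
    rcases h with ⟨p', hp', hq⟩ | ⟨p', hp', hq⟩
    · exact .inl ⟨p', hp', ih hq⟩
    · exact .inr ⟨p', hp', ih hq⟩

theorem tau_self_mem_sat (p : Proc Δ) : (.tau, p) ∈ sat (transFun step) p :=
  Set.mem_iUnion.2 ⟨0, rfl⟩

theorem mem_sat_of_step (hs : step p δ q) : (δ, q) ∈ sat (transFun step) p :=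
  Set.mem_iUnion.2 ⟨1, .inr ⟨q, .inr hs, rfl⟩⟩

theorem mem_sat_of_tauStar_of_mem_sat (h : TauStar step p r)
    (hq : (δ, q) ∈ sat (transFun step) r) : (δ, q) ∈ sat (transFun step) p := by
  induction h using Relation.ReflTransGen.head_induction_on with
  | refl => exact hq
  | head hs _ ih =>
    obtain ⟨n, hn⟩ := Set.mem_iUnion.1 ih
    exact Set.mem_iUnion.2 ⟨n + 1, mem_pow_succ_of_step_tau hs hn⟩

theorem mem_sat_of_mem_sat_of_tauStar (hq : (δ, q) ∈ sat (transFun step) p)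
    (h : TauStar step q r) : (δ, r) ∈ sat (transFun step) p := by
  induction h with
  | refl => exact hq
  | tail _ hs ih =>
    obtain ⟨n, hn⟩ := Set.mem_iUnion.1 ih
    exact Set.mem_iUnion.2 ⟨n + 1, mem_pow_succ_of_mem_pow_of_step_tau hs n hn⟩

theorem mem_sat_transFun_iff : (δ, q) ∈ sat (transFun step) p ↔ WStep step p δ q := by
  constructor
  · intro h
    obtain ⟨n, hn⟩ := Set.mem_iUnion.1 h
    exact wStep_of_mem_pow n hn
  · rintro (⟨rfl, h⟩ | ⟨-, p', q', h₁, h₂, h₃⟩)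
    · exact mem_sat_of_tauStar_of_mem_sat h (tau_self_mem_sat q)
    · exact mem_sat_of_tauStar_of_mem_sat h₁
        (mem_sat_of_mem_sat_of_tauStar (mem_sat_of_step h₂) h₃)

end Saturation

/-- The saturation of the SPC transition function coincides with the standard
weak transition relation: `(δ, q) ∈ h⋆(p) ↔ p ⇒δ q`. -/
theorem sat_eq_weak (Δ : Type) (p q : Proc Δ) (δ : Lab Δ) :
    (δ, q) ∈ sat (fun r => {x | Step r x.1 x.2}) p ↔ WStep Step p δ q :=
  mem_sat_transFun_iff
end Aux
end

section
/- In SPC extended with the unary operator ⌊·⌋ with rules pos and neg (for fixed visible actions a, b ∈ Δ), weak bisimilarity fails to be a congruence for ⌊·⌋: τ.a.0 ≈ a.0, but ⌊τ.a.0⌋ ≉ ⌊a.0⌋. -/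
/-- Processes of SPC extended with the unary operator `⌊·⌋`:
`p ::= 0 | δ.p | p ∥ q | p + q | ⌊p⌋`. -/
inductive FProc (Δ : Type) : Type
  | nil : FProc Δ
  | pre : Lab Δ → FProc Δ → FProc Δ
  | par : FProc Δ → FProc Δ → FProc Δ
  | choice : FProc Δ → FProc Δ → FProc Δ
  | floor : FProc Δ → FProc Δ

/-- The transition function of SPC extended with `⌊·⌋` subject to the rules
(pos): `p →τ p'` implies `⌊p⌋ →τ ⌊p'⌋`, and
(neg): if `p` has no `a`-transition then `⌊p⌋ →b 0`.
It is defined by recursion on terms, the transitions of `⌊p⌋` being determined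
by those of `p`. -/
def ftrans {Δ : Type} (a b : Δ) : FProc Δ → Set (Lab Δ × FProc Δ)
  | .nil => ∅
  | .pre δ p => {(δ, p)}
  | .par p q =>
      {x | ∃ δ p', (δ, p') ∈ ftrans a b p ∧ x = (δ, FProc.par p' q)} ∪
      {x | ∃ δ q', (δ, q') ∈ ftrans a b q ∧ x = (δ, FProc.par p q')} ∪
      {x | ∃ c p' q', (Lab.act c, p') ∈ ftrans a b p ∧ (Lab.coact c, q') ∈ ftrans a b q ∧
            x = (Lab.tau, FProc.par p' q')}
  | .choice p q => ftrans a b p ∪ ftrans a b q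
  | .floor p =>
      {x | ∃ p', (Lab.tau, p') ∈ ftrans a b p ∧ x = (Lab.tau, FProc.floor p')} ∪
      {x | (∀ p', (Lab.act a, p') ∉ ftrans a b p) ∧ x = (Lab.act b, FProc.nil)}

section WeakBisimulation

variable {Δ P : Type} {step : P → Lab Δ → P → Prop}

theorem WStep.single {p q : P} {δ : Lab Δ} (h : step p δ q) : WStep step p δ q := by
  by_cases hδ : δ = Lab.tau
  · subst hδ
    exact Or.inl ⟨rfl, .single h⟩
  · exact Or.inr ⟨hδ, p, q, .refl, h, .refl⟩

theorem WStep.tau_head {p p' q : P} {δ : Lab Δ} (h : step p Lab.tau p')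
    (hw : WStep step p' δ q) : WStep step p δ q := by
  rcases hw with ⟨hδ, hpq⟩ | ⟨hδ, r, r', hpr, hr, hrq⟩
  · exact Or.inl ⟨hδ, .head h hpq⟩
  · exact Or.inr ⟨hδ, r, r', .head h hpr, hr, hrq⟩

theorem wbisim_of_forall_step_iff_tau {p q : P}
    (hp : ∀ δ p', step p δ p' ↔ δ = Lab.tau ∧ p' = q) : WBisim step p q := by
  refine ⟨fun r s => (r = p ∧ s = q) ∨ r = s, ?_, .inl ⟨rfl, rfl⟩⟩
  rintro r s (⟨rfl, rfl⟩ | rfl)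
  · have hrs : step r Lab.tau s := (hp _ _).2 ⟨rfl, rfl⟩
    refine ⟨fun δ r' h => ?_, fun δ s' h => ⟨s', .tau_head hrs (.single h), .inr rfl⟩⟩
    obtain ⟨rfl, rfl⟩ := (hp δ r').1 h
    exact ⟨r', Or.inl ⟨rfl, .refl⟩, .inr rfl⟩
  · exact ⟨fun δ r' h => ⟨r', .single h, .inr rfl⟩, fun δ r' h => ⟨r', .single h, .inr rfl⟩⟩

theorem TauStar.eq_of_stuck {q x : P} (hq : ∀ δ q', ¬ step q δ q') (h : TauStar step q x) :
    x = q := by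
  induction h with
  | refl => rfl
  | tail _ hx ih => subst ih; exact absurd hx (hq _ _)

theorem not_wbisim_of_stuck {p p' q : P} {δ : Lab Δ} (hδ : δ ≠ Lab.tau) (hp : step p δ p')
    (hq : ∀ δ q', ¬ step q δ q') : ¬ WBisim step p q := by
  rintro ⟨R, hR, hpq⟩
  obtain ⟨q', hw, -⟩ := (hR p q hpq).1 δ p' hp
  rcases hw with ⟨hτ, -⟩ | ⟨-, r, r', hqr, hr, -⟩
  · exact hδ hτ
  · obtain rfl := hqr.eq_of_stuck hq
    exact hq _ _ hr

end WeakBisimulation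

section Floor

variable {Δ : Type} (a b : Δ)

@[simp]
theorem mem_ftrans_pre {δ δ' : Lab Δ} {p q : FProc Δ} :
    (δ', q) ∈ ftrans a b (.pre δ p) ↔ δ' = δ ∧ q = p := by
  simp [ftrans]

theorem ftrans_floor_pre_act (p : FProc Δ) : ftrans a b (.floor (.pre (.act a) p)) = ∅ := by
  simp [ftrans]

theorem act_b_mem_ftrans_floor_pre_tau (p : FProc Δ) :
    (Lab.act b, FProc.nil) ∈ ftrans a b (.floor (.pre .tau p)) :=
  Or.inr ⟨by simp, rfl⟩

end Floor

/-- With the rules pos and neg, weak bisimilarity fails to be a congruence for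
`⌊·⌋`: `τ.a.0 ≈ a.0` but `⌊τ.a.0⌋ ≉ ⌊a.0⌋`. -/
theorem floor_neg_not_congruence (Δ : Type) (a b : Δ) :
    WBisim (fun p δ q => (δ, q) ∈ ftrans a b p)
      (FProc.pre Lab.tau (FProc.pre (Lab.act a) FProc.nil))
      (FProc.pre (Lab.act a) FProc.nil) ∧
    ¬ WBisim (fun p δ q => (δ, q) ∈ ftrans a b p)
      (FProc.floor (FProc.pre Lab.tau (FProc.pre (Lab.act a) FProc.nil)))
      (FProc.floor (FProc.pre (Lab.act a) FProc.nil)) := by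
  refine ⟨wbisim_of_forall_step_iff_tau fun _ _ => mem_ftrans_pre a b, ?_⟩
  refine not_wbisim_of_stuck (by simp) (act_b_mem_ftrans_floor_pre_tau a b _) ?_
  simp [ftrans_floor_pre_act]
end
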